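/- arXiv:2509.14898 — 2 statements merged into one kernel-verified Lean document; each statement's English description precedes it below -/
import Mathlib

section
/- Let k ≥ 1 be an integer and let X, Y be strings such that X is a prefix of Y and |Y| ≤ (5/2)·|X|. Assume there is a primitive string Q_X with hd(Q_X^*, X) ≤ k and |Q_X| ≤ |X|/(128k), and a primitive string Q_Y with hd(Q_Y^*, Y) ≤ k and |Q_Y| ≤ |Y|/(128k). Then Q_X = Q_Y. -/
/-!
Outside at most `k` positions each, `X` agrees with `Q_X^∞` and with `Q_Y^∞`, so these two
periodic strings differ at most `2k` times among the first `|X| ≥ (2k+1)(|Q_X|+|Q_Y|)`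
positions and hence agree on a whole window of length `|Q_X| + |Q_Y|`. Through that window the
`|Q_X|`-periodicity of `Q_X^∞` transfers the period `|Q_Y|` of `Q_Y^∞` to `Q_X^∞`, which is then
`gcd(|Q_X|, |Q_Y|)`-periodic; primitivity of `Q_X` forces `|Q_X| ∣ |Q_Y|`. Symmetrically
`|Q_Y| ∣ |Q_X|`, and two periodic strings with the same period that agree on one full period
are equal.
-/

variable {α : Type*}

/-- Hamming distance: the number of positions at which two (equal-length) strings differ. -/
def hamDist [DecidableEq α] (S T : List α) : ℕ :=
  ((S.zip T).filter fun c => decide (c.1 ≠ c.2)).length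

/-- 1-based substring `T[i..j]` (inclusive). -/
def substr (T : List α) (i j : ℕ) : List α := (T.drop (i - 1)).take (j - i + 1)

/-- `Q^m`: the concatenation of `m` copies of `Q`. -/
def listPow (Q : List α) (m : ℕ) : List α := (List.replicate m Q).flatten

/-- `Q^∞[a..b]`: the segment from position `a` through `b` (1-based) of the infinite
periodic string `Q^∞` with `Q^∞[i] = Q[((i−1) mod |Q|) + 1]`. -/
def infSeg (Q : List α) (a b : ℕ) : List α := substr (listPow Q b) a b

/-- A nonempty string is primitive if it is not a power of a strictly shorter string,
i.e. it equals `R^m` only for `m = 1`. -/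
def PrimitiveStr (Q : List α) : Prop :=
  Q ≠ [] ∧ ∀ (R : List α) (m : ℕ), Q = listPow R m → m = 1

/-- The forward cyclic rotation `rot(S) = S[m]·S[1..m−1]`. -/
def rot (S : List α) : List α := S.rotate (S.length - 1)

/-- `p` is a `k`-mismatch period of `T`: `1 ≤ p ≤ |T|` and
`hd(T[1..n−p+1], T[p..n]) ≤ k`. -/
def IsMismatchPeriod [DecidableEq α] (k p : ℕ) (T : List α) : Prop :=
  1 ≤ p ∧ p ≤ T.length ∧
    hamDist (substr T 1 (T.length - p + 1)) (substr T p T.length) ≤ k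

namespace Function.Periodic

variable {β : Type*} {f g : ℕ → β} {p q : ℕ}

theorem nat_gcd (hp : Periodic f p) (hq : Periodic f q) : Periodic f (p.gcd q) := by
  induction p, q using Nat.gcd.induction with
  | H0 q => simpa using hq
  | H1 p q _ ih =>
    rw [Nat.gcd_rec]
    refine ih (fun i => ?_) hp
    rw [← hp.nat_mul (q / p) (i + q % p), Nat.cast_id, add_assoc, Nat.mod_add_div' q p, hq]

theorem eq_of_eqOn_Ico (hf : Periodic f p) (hg : Periodic g p) (hp : 0 < p) {a : ℕ}
    (h : Set.EqOn f g (Set.Ico a (a + p))) : f = g := by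
  have beyond_a : ∀ j, f (j + a) = g (j + a) := fun j => by
    rw [← (hf.add_const a).map_mod_nat, ← (hg.add_const a).map_mod_nat]
    exact h ⟨by omega, by have := Nat.mod_lt j hp; omega⟩
  funext i
  have : a ≤ a * p := Nat.le_mul_of_pos_right a hp
  rw [← hf.nat_mul a i, ← hg.nat_mul a i, Nat.cast_id, show i + a * p = i + a * p - a + a by omega]
  exact beyond_a _

theorem of_eqOn_Ico (hf : Periodic f p) (hg : Periodic g q) (hp : 0 < p) {a : ℕ}
    (h : Set.EqOn f g (Set.Ico a (a + p + q))) : Periodic f q := by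
  refine fun i => congrFun (hf.eq_of_eqOn_Ico (hf.add_const q) hp (a := a) fun j hj => ?_).symm i
  simp only [Set.mem_Ico] at hj
  rw [h (show j ∈ _ from ⟨hj.1, by omega⟩), h (show j + q ∈ _ from ⟨by omega, by omega⟩), hg]

end Function.Periodic

open Finset Function

/-- `infPow Q i` is the letter `Q^∞[i + 1]` (indices start at `0` here); it is `none` when
`Q = []`. -/
def infPow (Q : List α) (i : ℕ) : Option α := Q[i % Q.length]?

theorem infPow_periodic (Q : List α) : Periodic (infPow Q) Q.length := fun i => by
  simp only [infPow, Nat.add_mod_right]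

theorem length_listPow (Q : List α) (m : ℕ) : (listPow Q m).length = m * Q.length := by
  simp [listPow]

theorem getElem?_listPow (Q : List α) {m i : ℕ} (hi : i < m * Q.length) :
    (listPow Q m)[i]? = infPow Q i := by
  induction m generalizing i with
  | zero => simp at hi
  | succ m ih =>
    rw [listPow, List.replicate_succ, List.flatten_cons, ← listPow]
    rcases lt_or_ge i Q.length with hiQ | hiQ
    · rw [List.getElem?_append_left hiQ, infPow, Nat.mod_eq_of_lt hiQ]
    · rw [List.getElem?_append_right hiQ, ih (by rw [Nat.succ_mul] at hi; omega),
        ← infPow_periodic Q, Nat.sub_add_cancel hiQ]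

theorem length_infSeg_one {Q : List α} (hQ : Q ≠ []) (n : ℕ) : (infSeg Q 1 n).length = n := by
  have : n ≤ n * Q.length := Nat.le_mul_of_pos_right n (List.length_pos_iff.2 hQ)
  simp only [infSeg, substr, Nat.sub_self, List.drop_zero, List.length_take, length_listPow]
  rcases Nat.eq_zero_or_pos n with rfl | hn
  · simp
  · omega

theorem getElem?_infSeg_one {Q : List α} (hQ : Q ≠ []) {n i : ℕ} (hi : i < n) :
    (infSeg Q 1 n)[i]? = infPow Q i := by
  have : n ≤ n * Q.length := Nat.le_mul_of_pos_right n (List.length_pos_iff.2 hQ)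
  rw [infSeg, substr, List.drop_zero, List.getElem?_take_of_lt (by omega),
    getElem?_listPow Q (by omega)]

theorem hamDist_eq_card [DecidableEq α] {S T : List α} (hST : S.length = T.length) :
    hamDist S T = #{i ∈ range S.length | S[i]? ≠ T[i]?} := by
  induction S generalizing T with
  | nil => simp [hamDist]
  | cons a S ih =>
    cases T with
    | nil => simp at hST
    | cons b T =>
      have := ih (Nat.succ_injective hST)
      simp only [hamDist] at this ⊢
      rw [card_filter, List.length_cons, sum_range_succ', ← card_filter]
      simp only [List.getElem?_cons_succ, List.getElem?_cons_zero]
      rw [← this]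
      by_cases hab : a = b <;> simp [hab]

theorem card_filter_infPow_ne_le_hamDist [DecidableEq α] {Q X Y : List α} (hQ : Q ≠ [])
    (hXY : X <+: Y) :
    #{i ∈ range X.length | infPow Q i ≠ X[i]?} ≤ hamDist (infSeg Q 1 Y.length) Y := by
  obtain ⟨t, rfl⟩ := hXY
  rw [hamDist_eq_card (length_infSeg_one hQ _), length_infSeg_one hQ]
  calc #{i ∈ range X.length | infPow Q i ≠ X[i]?}
      = #{i ∈ range X.length | (infSeg Q 1 (X ++ t).length)[i]? ≠ (X ++ t)[i]?} := by
        refine congrArg card (filter_congr fun i hi => ?_)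
        have hi := mem_range.1 hi
        rw [getElem?_infSeg_one hQ (by simp; omega), List.getElem?_append_left hi]
    _ ≤ _ := card_le_card (filter_subset_filter _ (range_subset_range.2 (by simp)))

theorem card_filter_ne_le_add {ι β : Type*} [DecidableEq β] (s : Finset ι) (f g h : ι → β) :
    #{i ∈ s | f i ≠ g i} ≤ #{i ∈ s | f i ≠ h i} + #{i ∈ s | g i ≠ h i} := by
  classical
  refine (card_le_card fun i hi => ?_).trans (card_union_le _ _)
  simp only [mem_union, mem_filter] at hi ⊢
  by_contra! hfg
  exact hi.2 ((hfg.1 hi.1).trans (hfg.2 hi.1).symm)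

theorem exists_Ico_disjoint (B : Finset ℕ) {L n : ℕ} (h : (#B + 1) * L ≤ n) :
    ∃ a, a + L ≤ n ∧ Disjoint B (Ico a (a + L)) := by
  obtain ⟨j, hj, hjB⟩ := exists_mem_notMem_of_card_lt_card
    (s := B.image (· / L)) (t := range (#B + 1)) (by rw [card_range]; exact Nat.lt_succ_of_le card_image_le)
  refine ⟨j * L, ?_, disjoint_left.2 fun i hiB hi => hjB (mem_image.2 ⟨i, hiB, ?_⟩)⟩
  · have := Nat.mul_le_mul_right L (mem_range.1 hj)
    rw [Nat.succ_mul] at this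
    omega
  · rw [mem_Ico, ← Nat.succ_mul] at hi
    exact Nat.div_eq_of_lt_le hi.1 hi.2

theorem listPow_take_of_periodic {Q : List α} {d : ℕ} (hd : Periodic (infPow Q) d) (hd0 : 0 < d)
    (hdQ : d ∣ Q.length) : listPow (Q.take d) (Q.length / d) = Q := by
  refine List.ext_getElem? fun i => ?_
  rcases lt_or_ge i Q.length with hi | hi
  · have hdQ' : d ≤ Q.length := Nat.le_of_dvd (by omega) hdQ
    have hlen : (Q.take d).length = d := List.length_take_of_le hdQ'
    have hid : i % d < d := Nat.mod_lt i hd0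
    rw [getElem?_listPow _ (by rwa [hlen, Nat.div_mul_cancel hdQ]), infPow, hlen,
      List.getElem?_take_of_lt hid, ← Nat.mod_eq_of_lt (hid.trans_le hdQ'), ← infPow,
      hd.map_mod_nat, infPow, Nat.mod_eq_of_lt hi]
  · have : (listPow (Q.take d) (Q.length / d)).length ≤ Q.length := by
      rw [length_listPow]
      exact (Nat.mul_le_mul_left _ (List.length_take_le _ _)).trans (Nat.div_mul_le_self _ _)
    rw [List.getElem?_eq_none (by omega), List.getElem?_eq_none hi]

theorem PrimitiveStr.length_dvd_of_periodic {Q : List α} (hQ : PrimitiveStr Q) {q : ℕ}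
    (hq : Periodic (infPow Q) q) : Q.length ∣ q := by
  have hQ0 : 0 < Q.length := List.length_pos_iff.2 hQ.1
  have hd0 : 0 < Q.length.gcd q := Nat.gcd_pos_of_pos_left q hQ0
  have hdQ := Nat.gcd_dvd_left Q.length q
  have hexp := hQ.2 _ _ (listPow_take_of_periodic ((infPow_periodic Q).nat_gcd hq) hd0 hdQ).symm
  rw [← Nat.div_mul_cancel hdQ, hexp, one_mul]
  exact Nat.gcd_dvd_right _ _

theorem eq_of_infPow_eq {Q R : List α} (hQR : Q.length = R.length) (h : infPow Q = infPow R) :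
    Q = R := by
  refine List.ext_getElem? fun i => ?_
  rcases lt_or_ge i Q.length with hi | hi
  · have := congrFun h i
    rwa [infPow, infPow, ← hQR, Nat.mod_eq_of_lt hi] at this
  · rw [List.getElem?_eq_none hi, List.getElem?_eq_none (hQR ▸ hi)]

/-- if `X` is a prefix of `Y`, `|Y| ≤ (5/2)|X|`, and `Q_X`, `Q_Y` are
primitive strings approximating `X` resp. `Y` with at most `k` mismatches and
lengths at most `|X|/(128k)` resp. `|Y|/(128k)`, then `Q_X = Q_Y`. -/
theorem Q_equality [DecidableEq α] (k : ℕ) (hk : 1 ≤ k) (X Y QX QY : List α)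
    (hpre : X <+: Y) (hXY : (Y.length : ℚ) ≤ 5 / 2 * (X.length : ℚ))
    (hQXprim : PrimitiveStr QX)
    (hQXhd : hamDist (infSeg QX 1 X.length) X ≤ k)
    (hQXlen : (QX.length : ℚ) ≤ (X.length : ℚ) / (128 * (k : ℚ)))
    (hQYprim : PrimitiveStr QY)
    (hQYhd : hamDist (infSeg QY 1 Y.length) Y ≤ k)
    (hQYlen : (QY.length : ℚ) ≤ (Y.length : ℚ) / (128 * (k : ℚ))) :
    QX = QY := by
  have hp : 0 < QX.length := List.length_pos_iff.2 hQXprim.1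
  have hq : 0 < QY.length := List.length_pos_iff.2 hQYprim.1
  have hfit : (2 * k + 1) * (QX.length + QY.length) ≤ X.length := by
    have hk' : (1 : ℚ) ≤ k := by exact_mod_cast hk
    rw [le_div_iff₀ (by positivity)] at hQXlen hQYlen
    -- `(2k+1)(|Q_X|+|Q_Y|) ≤ 3k · (7/2)|X| / (128k) < |X|`
    have : ((2 * k + 1) * (QX.length + QY.length) : ℚ) ≤ X.length := by nlinarith
    exact_mod_cast this
  have hB : #{i ∈ range X.length | infPow QX i ≠ infPow QY i} ≤ 2 * k := by
    have hX := (card_filter_infPow_ne_le_hamDist hQXprim.1 (List.prefix_refl X)).trans hQXhd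
    have hY := (card_filter_infPow_ne_le_hamDist hQYprim.1 hpre).trans hQYhd
    have := card_filter_ne_le_add (range X.length) (infPow QX) (infPow QY) (X[·]?)
    omega
  obtain ⟨a, ha, hdisj⟩ := exists_Ico_disjoint _ ((Nat.mul_le_mul_right _ (Nat.succ_le_succ hB)).trans hfit)
  have hagree : Set.EqOn (infPow QX) (infPow QY) (Set.Ico a (a + QX.length + QY.length)) :=
    fun i hi => by_contra fun hne => disjoint_left.1 hdisj
      (mem_filter.2 ⟨mem_range.2 (by simp at hi; omega), hne⟩) (by simpa [← add_assoc] using hi)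
  have hpq : QX.length = QY.length := Nat.dvd_antisymm
    (hQXprim.length_dvd_of_periodic ((infPow_periodic QX).of_eqOn_Ico (infPow_periodic QY) hp hagree))
    (hQYprim.length_dvd_of_periodic ((infPow_periodic QY).of_eqOn_Ico (infPow_periodic QX) hq
      (by rw [add_right_comm]; exact hagree.symm)))
  refine eq_of_infPow_eq hpq ((infPow_periodic QX).eq_of_eqOn_Ico ?_ hp
    (hagree.mono (Set.Ico_subset_Ico_right (by omega))))
  exact hpq ▸ infPow_periodic QY
end

section
/- Let k ≥ 0 and m ≥ 1 be integers and let G_1, …, G_m be nonempty strings whose concatenation has total length n. Suppose there are integers t, t', r, r' with t + 1 = m − t' + 1 and strings X, Y such that X = G_1·G_2⋯G_t·(the prefix of G_{t+1} of length r) and Y = (the suffix of G_{t'} starting at position r')·G_{t'+1}⋯G_m, and suppose |X| + |Y| ≥ n − k. Then t' ≤ (m + k)/2 + 1 (equivalently, 2t' ≤ m + k + 2). -/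
variable {α : Type*}

/-! The strings `G_{t+2}, …, G_{t'-1}` lie strictly between the blocks covered by `X` and `Y`.
Since `t + t' = m`, there are `2t' - m - 2` of them, each of length at least one, so
`n - (|X| + |Y|) ≥ 2t' - m - 2`; together with `|X| + |Y| ≥ n - k` this gives the bound. -/

section Blocks

variable (G : ℕ → List α)

theorem length_flatten_map_range'_add (a b c : ℕ) :
    ((List.range' a (b + c)).map G).flatten.length =
      ((List.range' a b).map G).flatten.length +
        ((List.range' (a + b) c).map G).flatten.length := by
  rw [← List.range'_append_1, List.map_append, List.flatten_append, List.length_append]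

theorem length_flatten_map_range'_append_take_le (a b r : ℕ) :
    (((List.range' a b).map G).flatten ++ (G (a + b)).take r).length ≤
      ((List.range' a (b + 1)).map G).flatten.length := by
  simp [List.range'_concat]

theorem length_drop_append_flatten_map_range'_le (a b j : ℕ) :
    ((G a).drop j ++ ((List.range' (a + 1) b).map G).flatten).length ≤
      ((List.range' a (b + 1)).map G).flatten.length := by
  simp [List.range'_succ]

theorem le_length_flatten_map_range' {a b : ℕ}
    (hG : ∀ i, a ≤ i → i < a + b → G i ≠ []) :
    b ≤ ((List.range' a b).map G).flatten.length := by
  induction b with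
  | zero => simp
  | succ b ih =>
    have hlast : 0 < (G (a + b)).length := List.length_pos_iff.mpr (hG _ le_self_add (by omega))
    rw [List.range'_concat, List.map_append, List.flatten_append, List.length_append]
    simpa using Nat.add_le_add (ih fun i hi hib => hG i hi (by omega)) hlast

end Blocks

theorem t'_is_small_general (k m : ℕ) (G : ℕ → List α)
    (hG : ∀ i, 1 ≤ i → i ≤ m → G i ≠ [])
    (n : ℕ) (hn : n = (((List.range' 1 m).map G).flatten).length)
    (t t' r r' : ℕ) (ht'm : t' ≤ m)
    (htt : t + 1 = m - t' + 1)
    (X Y : List α)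
    (hX : X = ((List.range' 1 t).map G).flatten ++ (G (t + 1)).take r)
    (hY : Y = (G t').drop (r' - 1) ++ ((List.range' (t' + 1) (m - t')).map G).flatten)
    (hlen : n - k ≤ X.length + Y.length) :
    2 * t' ≤ m + k + 2 := by
  obtain hclose | hfar := le_or_gt t' (t + 1)
  · omega
  obtain ⟨g, rfl⟩ : ∃ g, t' = t + 2 + g := ⟨t' - (t + 2), by omega⟩
  obtain rfl : m = t + 1 + (g + (t + 1)) := by omega
  rw [show t + 1 + (g + (t + 1)) - (t + 2 + g) = t by omega] at hY
  have hn_split : n = ((List.range' 1 (t + 1)).map G).flatten.length +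
      ((List.range' (t + 2) g).map G).flatten.length +
      ((List.range' (t + 2 + g) (t + 1)).map G).flatten.length := by
    rw [hn, length_flatten_map_range'_add G 1 (t + 1), show 1 + (t + 1) = t + 2 by omega,
      length_flatten_map_range'_add G (t + 2) g]
    omega
  have hX_le : X.length ≤ ((List.range' 1 (t + 1)).map G).flatten.length := by
    have := length_flatten_map_range'_append_take_le G 1 t r
    rwa [Nat.add_comm 1 t, ← hX] at this
  have hY_le : Y.length ≤ ((List.range' (t + 2 + g) (t + 1)).map G).flatten.length :=
    hY ▸ length_drop_append_flatten_map_range'_le G (t + 2 + g) t (r' - 1)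
  have hgap : g ≤ ((List.range' (t + 2) g).map G).flatten.length :=
    le_length_flatten_map_range' G fun i hi hig => hG i (by omega) (by omega)
  omega

/-- if `X` covers `G_1⋯G_t` plus a prefix of `G_{t+1}`, `Y` covers a suffix
of `G_{t'}` plus `G_{t'+1}⋯G_m`, with `t + 1 = m − t' + 1` and `|X| + |Y| ≥ n − k`
(where `n` is the total length of `G_1⋯G_m`, all `G_i` nonempty), then
`t' ≤ (m + k)/2 + 1`, i.e. `2t' ≤ m + k + 2`. -/
theorem t'_is_small (k m : ℕ) (G : ℕ → List α) (hm : 1 ≤ m)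
    (hG : ∀ i, 1 ≤ i → i ≤ m → G i ≠ [])
    (n : ℕ) (hn : n = (((List.range' 1 m).map G).flatten).length)
    (t t' r r' : ℕ) (ht'1 : 1 ≤ t') (ht'm : t' ≤ m)
    (htt : t + 1 = m - t' + 1)
    (hr : r ≤ (G (t + 1)).length) (hr'1 : 1 ≤ r') (hr'2 : r' ≤ (G t').length + 1)
    (X Y : List α)
    (hX : X = ((List.range' 1 t).map G).flatten ++ (G (t + 1)).take r)
    (hY : Y = (G t').drop (r' - 1) ++ ((List.range' (t' + 1) (m - t')).map G).flatten)
    (hlen : n - k ≤ X.length + Y.length) :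
    2 * t' ≤ m + k + 2 :=
  t'_is_small_general k m G hG n hn t t' r r' ht'm htt X Y hX hY hlen
end
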